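/- Let O be a generic type C column sequence with chains C_1, …, C_l, and for each i let O_i be the type C column sequence whose chain decomposition is the single chain C_i. Then the map sending (O_1', …, O_l') ∈ Norm(O_1) × … × Norm(O_l) to the concatenated sequence O_1' O_2' … O_l' is a bijection onto Norm(O), and the chain decomposition of each member of Norm(O) is the concatenation of the chain decompositions of the corresponding O_i'. In particular |Norm(O)| = Π_{i=1}^l |Norm(O_i)|. -/

import Mathlib

/-!
Inside a generic chain `C`, degenerations never change the first entry, never lower the last
entry and, when the last entry is positive, never delete entries. Consecutive chains of `O`
satisfy `head C_{j+1} < last C_j`, so this separation survives arbitrary degenerations of the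
chains: no interior pair of a concatenation `O_1' ⋯ O_l'` straddles two blocks, every
degeneration of the concatenation is a degeneration of a single block, and the block lengths
stay fixed, which makes the decomposition unique. The invariance inside a chain comes from an
explicit description of the members of `Norm(C)` by the grammar `ChainShape`.
-/

/-- A type C column sequence: weakly decreasing, even length, and each
consecutive pair `(c_{2i}, c_{2i+1})` has even sum. -/
def TypeC (c : List ℕ) : Prop :=
  Even c.length ∧ c.Chain' (· ≥ ·) ∧
    ∀ i, 2 * i + 1 < c.length → Even (c.getD (2 * i) 0 + c.getD (2 * i + 1) 0)

/-- A chain `[b_0, b_1, …, b_{2k+1}]`: nonempty, of even length, weakly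
decreasing, with `b_{2i-1} = b_{2i}` for `1 ≤ i ≤ k`. -/
def IsChainSeq (b : List ℕ) : Prop :=
  b ≠ [] ∧ Even b.length ∧ b.Chain' (· ≥ ·) ∧
    ∀ i, 2 * i + 2 < b.length → b.getD (2 * i + 1) 0 = b.getD (2 * i + 2) 0

/-- The chain decomposition of a column sequence: cut after each odd
position `2q+1` such that `c_{2q+1} > c_{2q+2}`. -/
def chains : List ℕ → List (List ℕ)
  | a :: b :: rest =>
    match chains rest with
    | [] => [[a, b]]
    | C :: L => if C.headI < b then [a, b] :: C :: L else (a :: b :: C) :: L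
  | _ => []

/-- A chain is generic if it is `[b_0 = b_1]` (length 2 with equal entries)
or has length `≥ 4` and `b_{2i} > b_{2i+1}` for all `i`. -/
def GenericChain (b : List ℕ) : Prop :=
  (b.length = 2 ∧ b.getD 0 0 = b.getD 1 0) ∨
  (4 ≤ b.length ∧ ∀ i, 2 * i + 1 < b.length → b.getD (2 * i + 1) 0 < b.getD (2 * i) 0)

/-- A column sequence is generic if all of its chains are generic. -/
def GenericSeq (c : List ℕ) : Prop := ∀ C ∈ chains c, GenericChain C

/-- The fundamental degeneration of a quadruple `b_0 ≥ b_1 = b_2 ≥ b_3`. -/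
def fundDeg (b0 b1 b2 b3 : ℕ) : ℕ × ℕ × ℕ × ℕ :=
  if b0 = b1 then
    if b2 = b3 then (b0 + 1, b1 + 1, b2 - 1, b3 - 1)
    else (b0 + 1, b1 + 1, b2 - 2, b3)
  else
    if b2 = b3 then (b0, b1 + 2, b2 - 1, b3 - 1)
    else (b0, b1 + 2, b2 - 2, b3)

/-- Replacement of the four consecutive entries at positions
`2i, 2i+1, 2i+2, 2i+3` by their fundamental degeneration, deleting the
last two entries if the two lowered entries both become `0`. -/
def degenAt (c : List ℕ) (i : ℕ) : List ℕ :=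
  let q := fundDeg (c.getD (2 * i) 0) (c.getD (2 * i + 1) 0)
    (c.getD (2 * i + 2) 0) (c.getD (2 * i + 3) 0)
  let c' := c.take (2 * i) ++ [q.1, q.2.1, q.2.2.1, q.2.2.2] ++ c.drop (2 * i + 4)
  if q.2.2.1 = 0 ∧ q.2.2.2 = 0 then c'.dropLast.dropLast else c'

/-- `Norm(O)`: the smallest collection containing `O` and closed under
fundamental degeneration at an interior pair of a chain (the positions
`(2i+1, 2i+2)` carry an interior pair of a chain exactly when the two
entries there are equal). -/
inductive NormMem (O : List ℕ) : List ℕ → Prop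
  | base : NormMem O O
  | step (c : List ℕ) (i : ℕ) : NormMem O c → 2 * i + 3 < c.length →
      c.getD (2 * i + 1) 0 = c.getD (2 * i + 2) 0 → NormMem O (degenAt c i)


namespace List

theorem getLastI_cons_of_ne_nil {a : ℕ} {l : List ℕ} (hl : l ≠ []) :
    (a :: l).getLastI = l.getLastI := by
  obtain ⟨b, l, rfl⟩ := exists_cons_of_ne_nil hl
  simp [getLastI_eq_getLast?_getD]

theorem getD_length_sub_one (l : List ℕ) : l.getD (l.length - 1) 0 = l.getLastI := by
  simp [getLastI_eq_getLast?_getD, getLast?_eq_getElem?, getD_eq_getElem?_getD]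

theorem getD_append_two_mul_add {L l : List ℕ} {m : ℕ} (hL : L.length = 2 * m) (k : ℕ) :
    (L ++ l).getD (2 * m + k) 0 = l.getD k 0 := by
  rw [getD_append_right _ _ _ _ (by omega)]
  congr 1
  omega

theorem exists_eq_cons_of_headI_eq {l : List ℕ} {a : ℕ} (hl : l ≠ []) (h : l.headI = a) :
    ∃ l', l = a :: l' := by
  obtain ⟨b, l', rfl⟩ := exists_cons_of_ne_nil hl
  exact ⟨l', by simpa using h⟩

end List

open List hiding chains

theorem typeC_nil : TypeC [] :=
  ⟨⟨0, rfl⟩, isChain_nil, by simp⟩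

theorem typeC_cons_cons {a b : ℕ} {l : List ℕ} :
    TypeC (a :: b :: l) ↔ b ≤ a ∧ a % 2 = b % 2 ∧ (∀ x ∈ l.head?, x ≤ b) ∧ TypeC l := by
  have hpar : Even (a + b) ↔ a % 2 = b % 2 := by
    rw [Nat.even_add, Nat.even_iff, Nat.even_iff]; omega
  constructor
  · rintro ⟨hev, hchain, hp⟩
    obtain ⟨hab, hchain⟩ := isChain_cons_cons.1 hchain
    obtain ⟨hbl, hl⟩ := isChain_cons.1 hchain
    refine ⟨hab, hpar.1 (by simpa using hp 0 (by simp)), hbl,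
      by simpa [Nat.even_add_one] using hev, hl, fun i hi => ?_⟩
    simpa [Nat.mul_add] using hp (i + 1) (by simp; omega)
  · rintro ⟨hab, habp, hbl, hev, hl, hp⟩
    refine ⟨by simpa [Nat.even_add_one] using hev,
      isChain_cons_cons.2 ⟨hab, isChain_cons.2 ⟨hbl, hl⟩⟩, fun i hi => ?_⟩
    cases i with
    | zero => simpa using hpar.2 habp
    | succ i => simpa [Nat.mul_add] using hp i (by simp at hi; omega)

theorem isChainSeq_cons_cons {a b : ℕ} {l : List ℕ} :
    IsChainSeq (a :: b :: l) ↔ b ≤ a ∧ (l = [] ∨ l.headI = b ∧ IsChainSeq l) := by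
  constructor
  · rintro ⟨-, hev, hchain, hm⟩
    obtain ⟨hab, hl⟩ := isChain_cons_cons.1 hchain
    refine ⟨hab, ?_⟩
    rcases l with _ | ⟨c, l⟩
    · exact Or.inl rfl
    · refine Or.inr ⟨(hm 0 (by simp)).symm, by simp, by simpa [Nat.even_add_one] using hev,
        hl.tail, fun i hi => ?_⟩
      simpa [Nat.mul_add] using hm (i + 1) (by simp at hi ⊢; omega)
  · rintro ⟨hab, rfl | ⟨hb, hne, hev, hl, hm⟩⟩
    · exact ⟨by simp, ⟨1, rfl⟩, isChain_pair.2 hab, fun i hi => by simp at hi⟩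
    · obtain ⟨c, l, rfl⟩ := exists_cons_of_ne_nil hne
      simp only [headI_cons] at hb
      subst hb
      refine ⟨by simp, by simpa [Nat.even_add_one] using hev,
        isChain_cons_cons.2 ⟨hab, isChain_cons_cons.2 ⟨le_rfl, hl⟩⟩, fun i hi => ?_⟩
      cases i with
      | zero => rfl
      | succ i => simpa [Nat.mul_add] using hm i (by simp at hi ⊢; omega)

theorem degenAt_cons_cons (x y : ℕ) {c : List ℕ} {i : ℕ} (h : 2 * i + 3 < c.length) :
    degenAt (x :: y :: c) (i + 1) = x :: y :: degenAt c i := by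
  simp only [degenAt, show 2 * (i + 1) = 2 * i + 1 + 1 by ring, getD_cons_succ, take_succ_cons,
    show 2 * i + 1 + 1 + 4 = 2 * i + 4 + 1 + 1 by ring, drop_succ_cons, cons_append]
  split_ifs
  · have : (take (2 * i) c ++ [0, 0]).length ≥ 2 := by simp
    simp [dropLast_cons_of_ne_nil, *]
  · rfl

theorem degenAt_append_left {L c : List ℕ} {m : ℕ} (hL : L.length = 2 * m) {i : ℕ}
    (h : 2 * i + 3 < c.length) : degenAt (L ++ c) (m + i) = L ++ degenAt c i := by
  induction m generalizing L with
  | zero => simp_all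
  | succ m ih =>
    obtain ⟨x, y, L, rfl⟩ : ∃ x y L', L = x :: y :: L' := by
      match L, hL with
      | x :: y :: L', _ => exact ⟨x, y, L', rfl⟩
    have hL' : L.length = 2 * m := by simp at hL; omega
    rw [cons_append, cons_append, show m + 1 + i = m + i + 1 by ring,
      degenAt_cons_cons x y (by simp; omega), ih hL', cons_append, cons_append]

theorem degenAt_append_right {c : List ℕ} {i : ℕ} (R : List ℕ) (h : 2 * i + 3 < c.length)
    (hl : (degenAt c i).length = c.length) : degenAt (c ++ R) i = degenAt c i ++ R := by
  have hget : ∀ k < 4, (c ++ R).getD (2 * i + k) 0 = c.getD (2 * i + k) 0 :=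
    fun k hk => getD_append _ _ _ _ (by omega)
  have h0 := hget 0 (by omega)
  simp only [add_zero] at h0
  simp only [degenAt, h0, hget 1 (by omega), hget 2 (by omega), hget 3 (by omega)] at hl ⊢
  split_ifs at hl ⊢
  · simp at hl; omega
  · rw [take_append_of_le_length (by omega), drop_append_of_le_length (by omega)]
    simp

theorem degenAt_zero_of_ne {a b c d a' b' c' d' : ℕ} (rest : List ℕ)
    (h : fundDeg a b c d = (a', b', c', d')) (hne : c' ≠ 0) :
    degenAt (a :: b :: c :: d :: rest) 0 = a' :: b' :: c' :: d' :: rest := by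
  simp [degenAt, h, hne]

theorem degenAt_zero_of_eq_zero {a b c d a' b' : ℕ} (h : fundDeg a b c d = (a', b', 0, 0)) :
    degenAt [a, b, c, d] 0 = [a', b'] := by
  simp [degenAt, h]

def lowered (b d : ℕ) : ℕ × ℕ := if b = d then (b - 1, d - 1) else (b - 2, d)

theorem fundDeg_of_lt {a b d : ℕ} (h : b < a) : fundDeg a b b d = (a, b + 2, lowered b d) := by
  unfold fundDeg lowered
  split_ifs <;> first | omega | rfl

theorem fundDeg_self (b d : ℕ) : fundDeg b b b d = (b + 1, b + 1, lowered b d) := by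
  unfold fundDeg lowered
  simp only [↓reduceIte]
  split_ifs <;> rfl

/-- A grammar generating the suffixes, starting at an even position, of the members of
`Norm(C)` for a generic chain `C` with last entry `t`. The index `some u` marks a suffix that
follows an entry which degenerations have raised above `u`, and whose own first entry has been
lowered below `u`. -/
inductive ChainShape (t : ℕ) : Option ℕ → List ℕ → Prop
  | pair (x y : ℕ) : t ≤ y → y ≤ x → x % 2 = y % 2 → (x = y → t = 0 ∧ 4 ≤ y) →
      ChainShape t none [x, y]
  | keep (x u : ℕ) (rest : List ℕ) : ChainShape t none (u :: rest) → u < x → x % 2 = u % 2 →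
      ChainShape t none (x :: u :: u :: rest)
  | raise (x u : ℕ) (z : List ℕ) : ChainShape t (some u) z → u + 2 ≤ x → x % 2 = u % 2 →
      ChainShape t none (x :: (u + 2) :: z)
  | lowerPair (u y : ℕ) : t ≤ y → y + 2 ≤ u → u % 2 = y % 2 → ChainShape t (some u) [u - 2, y]
  | lowerPairEq (u : ℕ) : 4 ≤ u → t = 0 → ChainShape t (some u) [u - 1, u - 1]
  | lowerKeep (u v : ℕ) (rest : List ℕ) : ChainShape t none (v :: rest) → v + 2 ≤ u →
      u % 2 = v % 2 → ChainShape t (some u) ((u - 2) :: v :: v :: rest)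
  | lowerRaise (u v : ℕ) (z : List ℕ) : ChainShape t (some v) z → v + 4 ≤ u → u % 2 = v % 2 →
      ChainShape t (some u) ((u - 2) :: (v + 2) :: z)
  | meet (u v : ℕ) (z : List ℕ) : ChainShape t (some v) z → v + 2 ≤ u → u % 2 = v % 2 →
      ChainShape t (some u) ((u + v) / 2 :: (u + v) / 2 :: z)

namespace ChainShape

variable {t : ℕ} {o : Option ℕ} {c : List ℕ}

theorem two_le_length (h : ChainShape t o c) : 2 ≤ c.length := by
  cases h <;> simp

theorem ne_nil (h : ChainShape t o c) : c ≠ [] :=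
  ne_nil_of_length_pos (by have := h.two_le_length; omega)

theorem even_length (h : ChainShape t o c) : Even c.length := by
  induction h <;> simp_all [Nat.even_add_one]

theorem le_getLastI (h : ChainShape t o c) : t ≤ c.getLastI := by
  induction h with
  | pair | lowerPair => simpa [getLastI]
  | lowerPairEq u _ ht => simp [getLastI, ht]
  | keep _ _ _ _ _ _ ih | lowerKeep _ _ _ _ _ _ ih =>
    rwa [getLastI_cons_of_ne_nil (by simp), getLastI_cons_of_ne_nil (by simp)]
  | raise _ _ _ h _ _ ih | lowerRaise _ _ _ h _ _ ih | meet _ _ _ h _ _ ih =>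
    rwa [getLastI_cons_of_ne_nil (by simp), getLastI_cons_of_ne_nil h.ne_nil]

theorem one_le_headI (h : ChainShape t none c) : 1 ≤ c.headI := by
  cases h with
  | pair x y _ hyx _ hxy => by_cases x = y <;> simp_all <;> omega
  | keep | raise => simp; omega

theorem headI_lt {u : ℕ} (h : ChainShape t (some u) c) : c.headI < u := by
  cases h <;> simp <;> omega

theorem lowered_cons {v w : ℕ} {rest : List ℕ} (h : ChainShape t none (v :: w :: rest)) :
    (v = 2 ∧ w = 0 ∧ rest = [] ∧ t = 0) ∨
        ((lowered v w).1 ≠ 0 ∧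
        ChainShape t (some v) ((lowered v w).1 :: (lowered v w).2 :: rest)) := by
  cases h with
  | pair _ _ hty hyx hpar hxy =>
    by_cases hvw : v = w
    · subst hvw
      obtain ⟨ht, hv⟩ := hxy rfl
      exact Or.inr ⟨by simp [lowered]; omega, by simpa [lowered] using lowerPairEq v hv ht⟩
    · by_cases hv : v = 2
      · exact Or.inl ⟨hv, by omega, rfl, by omega⟩
      · exact Or.inr ⟨by simp [lowered, hvw]; omega,
          by simpa [lowered, hvw] using lowerPair v w hty (by omega) hpar⟩
  | keep _ _ rest hw hwv hpar =>
    have := hw.one_le_headI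
    simp only [headI_cons] at this
    exact Or.inr ⟨by simp [lowered, hwv.ne']; omega,
      by simpa [lowered, hwv.ne'] using lowerKeep v w rest hw (by omega) hpar⟩
  | raise _ u _ hz huv hpar =>
    right
    by_cases hv : v = u + 2
    · subst hv
      have hmeet := meet (u + 2) u rest hz le_rfl (by omega)
      rw [show (u + 2 + u) / 2 = u + 2 - 1 by omega] at hmeet
      exact ⟨by simp [lowered], by simpa [lowered] using hmeet⟩
    · exact ⟨by simp [lowered, hv]; omega,
        by simpa [lowered, hv] using lowerRaise v u rest hz (by omega) hpar⟩

theorem degenAt_zero_keep {x v w : ℕ} {rest : List ℕ} (h : ChainShape t none (v :: w :: rest))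
    (hvx : v < x) (hpar : x % 2 = v % 2) :
    ChainShape t none (degenAt (x :: v :: v :: w :: rest) 0) ∧
      (degenAt (x :: v :: v :: w :: rest) 0).headI = x ∧
      (1 ≤ t → (degenAt (x :: v :: v :: w :: rest) 0).length = rest.length + 4) := by
  rcases h.lowered_cons with ⟨rfl, rfl, rfl, rfl⟩ | ⟨hne, hz⟩
  · rw [degenAt_zero_of_eq_zero (fundDeg_of_lt hvx)]
    exact ⟨pair x 4 (by omega) (by omega) (by omega) (by omega), rfl, by omega⟩
  · rw [degenAt_zero_of_ne rest (fundDeg_of_lt hvx) hne]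
    exact ⟨raise x v _ hz (by omega) hpar, rfl, fun _ => rfl⟩

theorem degenAt_zero_lowerKeep {u v w : ℕ} {rest : List ℕ}
    (h : ChainShape t none (v :: w :: rest)) (hvu : v + 2 ≤ u) (hpar : u % 2 = v % 2) :
    ChainShape t (some u) (degenAt ((u - 2) :: v :: v :: w :: rest) 0) ∧
      (1 ≤ t → (degenAt ((u - 2) :: v :: v :: w :: rest) 0).length = rest.length + 4) := by
  rcases Nat.eq_or_lt_of_le (show v ≤ u - 2 by omega) with hv | hv
  · rw [← hv, show u = v + 2 by omega]
    rcases h.lowered_cons with ⟨rfl, rfl, rfl, rfl⟩ | ⟨hne, hz⟩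
    · rw [degenAt_zero_of_eq_zero (fundDeg_self 2 0)]
      exact ⟨lowerPairEq 4 le_rfl rfl, by omega⟩
    · rw [degenAt_zero_of_ne rest (fundDeg_self v w) hne]
      have hmeet := meet (v + 2) v _ hz le_rfl (by omega)
      rw [show (v + 2 + v) / 2 = v + 1 by omega] at hmeet
      exact ⟨hmeet, fun _ => rfl⟩
  · rcases h.lowered_cons with ⟨rfl, rfl, rfl, rfl⟩ | ⟨hne, hz⟩
    · rw [degenAt_zero_of_eq_zero (fundDeg_of_lt hv)]
      exact ⟨lowerPair u 4 (by omega) (by omega) (by omega), by omega⟩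
    · rw [degenAt_zero_of_ne rest (fundDeg_of_lt hv) hne]
      exact ⟨lowerRaise u v _ hz (by omega) hpar, fun _ => rfl⟩

theorem step (h : ChainShape t o c) {i : ℕ}
    (hi : 2 * i + 3 < c.length) (heq : c.getD (2 * i + 1) 0 = c.getD (2 * i + 2) 0) :
    ChainShape t o (degenAt c i) ∧ (o = none → (degenAt c i).headI = c.headI) ∧
      (1 ≤ t → (degenAt c i).length = c.length) := by
  induction h generalizing i with
  | pair | lowerPair | lowerPairEq => simp at hi
  | keep x u rest hu hux hpar ih =>
    rcases i with _ | i
    · obtain ⟨w, rest, rfl⟩ := exists_cons_of_length_pos (l := rest)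
        (by have := hu.two_le_length; simp at this; omega)
      obtain ⟨h1, h2, h3⟩ := hu.degenAt_zero_keep hux hpar
      exact ⟨h1, fun _ => h2, fun ht => by simp [h3 ht]⟩
    · obtain ⟨h1, h2, h3⟩ :=
        ih (i := i) (by simp at hi ⊢; omega) (by simpa [Nat.mul_add] using heq)
      rw [degenAt_cons_cons x u (by simp at hi ⊢; omega)]
      obtain ⟨rest', hrest⟩ := exists_eq_cons_of_headI_eq h1.ne_nil (h2 rfl)
      rw [hrest] at h1 h3 ⊢
      exact ⟨keep x u rest' h1 hux hpar, fun _ => rfl, fun ht => by simpa using h3 ht⟩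
  | lowerKeep u v rest hv hvu hpar ih =>
    rcases i with _ | i
    · obtain ⟨w, rest, rfl⟩ := exists_cons_of_length_pos (l := rest)
        (by have := hv.two_le_length; simp at this; omega)
      obtain ⟨h1, h2⟩ := hv.degenAt_zero_lowerKeep hvu hpar
      exact ⟨h1, nofun, fun ht => by simp [h2 ht]⟩
    · obtain ⟨h1, h2, h3⟩ :=
        ih (i := i) (by simp at hi ⊢; omega) (by simpa [Nat.mul_add] using heq)
      rw [degenAt_cons_cons (u - 2) v (by simp at hi ⊢; omega)]
      obtain ⟨rest', hrest⟩ := exists_eq_cons_of_headI_eq h1.ne_nil (h2 rfl)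
      rw [hrest] at h1 h3 ⊢
      exact ⟨lowerKeep u v rest' h1 hvu hpar, nofun, fun ht => by simpa using h3 ht⟩
  | raise x u z hz _ _ ih | lowerRaise _ u z hz _ _ ih | meet _ u z hz _ _ ih =>
    rcases i with _ | i
    · obtain ⟨a, l, rfl⟩ := exists_cons_of_ne_nil hz.ne_nil
      have := hz.headI_lt
      simp at heq this
      omega
    · obtain ⟨h1, -, h3⟩ :=
        ih (i := i) (by simp at hi ⊢; omega) (by simpa [Nat.mul_add] using heq)
      rw [degenAt_cons_cons _ _ (by simp at hi ⊢; omega)]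
      refine ⟨by constructor <;> assumption, by simp, fun ht => by simpa using h3 ht⟩

theorem of_strict : ∀ {C : List ℕ}, TypeC C → IsChainSeq C →
    (∀ i, 2 * i + 1 < C.length → C.getD (2 * i + 1) 0 < C.getD (2 * i) 0) →
    ChainShape C.getLastI none C
  | [], _, hC, _ => absurd rfl hC.1
  | [_], _, hC, _ => by simp [IsChainSeq] at hC
  | a :: b :: l, hT, hC, hs => by
    obtain ⟨hba, hpar, -, hTl⟩ := typeC_cons_cons.1 hT
    have hlt : b < a := by simpa using hs 0 (by simp)
    rcases (isChainSeq_cons_cons.1 hC).2 with rfl | ⟨hb, hCl⟩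
    · exact pair a b le_rfl hba hpar (by omega)
    · have hsl : ∀ i, 2 * i + 1 < l.length → l.getD (2 * i + 1) 0 < l.getD (2 * i) 0 :=
        fun i hi => by simpa [Nat.mul_add] using hs (i + 1) (by simp; omega)
      obtain ⟨l', hl⟩ := exists_eq_cons_of_headI_eq hCl.1 hb
      have hshape := of_strict hTl hCl hsl
      rw [hl] at hshape ⊢
      rw [getLastI_cons_of_ne_nil (by simp), getLastI_cons_of_ne_nil (by simp)]
      exact keep a b l' hshape hlt hpar

end ChainShape

def IsGenericTypeCChain (C : List ℕ) : Prop := TypeC C ∧ IsChainSeq C ∧ GenericChain C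

namespace NormMem

variable {C c : List ℕ}

theorem trans {A : List ℕ} (h₁ : NormMem A C) (h₂ : NormMem C c) : NormMem A c := by
  induction h₂ with
  | base => exact h₁
  | step c i _ hi heq ih => exact step c i ih hi heq

theorem chainShape (hC : IsGenericTypeCChain C) (h : NormMem C c) :
    (C.length = 2 ∧ c = C) ∨ (ChainShape C.getLastI none c ∧ c.headI = C.headI) := by
  induction h with
  | base =>
    rcases hC.2.2 with ⟨hl, -⟩ | ⟨-, hs⟩
    · exact Or.inl ⟨hl, rfl⟩
    · exact Or.inr ⟨ChainShape.of_strict hC.1 hC.2.1 hs, rfl⟩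
  | step c i _ hi heq ih =>
    rcases ih with ⟨hl, rfl⟩ | ⟨hs, hh⟩
    · omega
    · obtain ⟨h₁, h₂, -⟩ := hs.step hi heq
      exact Or.inr ⟨h₁, (h₂ rfl).trans hh⟩

theorem ne_nil (hC : IsGenericTypeCChain C) (h : NormMem C c) : c ≠ [] := by
  rcases h.chainShape hC with ⟨-, rfl⟩ | ⟨hs, -⟩
  exacts [hC.2.1.1, hs.ne_nil]

theorem even_length (hC : IsGenericTypeCChain C) (h : NormMem C c) : Even c.length := by
  rcases h.chainShape hC with ⟨-, rfl⟩ | ⟨hs, -⟩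
  exacts [hC.2.1.2.1, hs.even_length]

theorem headI_eq (hC : IsGenericTypeCChain C) (h : NormMem C c) : c.headI = C.headI := by
  rcases h.chainShape hC with ⟨-, rfl⟩ | ⟨-, hh⟩
  exacts [rfl, hh]

theorem getLastI_le (hC : IsGenericTypeCChain C) (h : NormMem C c) :
    C.getLastI ≤ c.getLastI := by
  rcases h.chainShape hC with ⟨-, rfl⟩ | ⟨hs, -⟩
  exacts [le_rfl, hs.le_getLastI]

theorem length_degenAt (hC : IsGenericTypeCChain C) (ht : 1 ≤ C.getLastI) (h : NormMem C c)
    {i : ℕ} (hi : 2 * i + 3 < c.length) (heq : c.getD (2 * i + 1) 0 = c.getD (2 * i + 2) 0) :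
    (degenAt c i).length = c.length := by
  rcases h.chainShape hC with ⟨hl, rfl⟩ | ⟨hs, -⟩
  · omega
  · exact (hs.step hi heq).2.2 ht

theorem length_eq (hC : IsGenericTypeCChain C) (ht : 1 ≤ C.getLastI) (h : NormMem C c) :
    c.length = C.length := by
  induction h with
  | base => rfl
  | step c i hc hi heq ih => rw [hc.length_degenAt hC ht hi heq, ih]

theorem append_left {A L : List ℕ} (hL : Even L.length) (h : NormMem A c) :
    NormMem (L ++ A) (L ++ c) := by
  obtain ⟨m, hm⟩ := hL
  induction h with
  | base => exact base
  | step c i _ hi heq ih =>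
    rw [← degenAt_append_left (by omega : L.length = 2 * m) hi]
    refine step _ _ ih (by simp; omega) ?_
    rw [show 2 * (m + i) + 1 = 2 * m + (2 * i + 1) by ring,
      show 2 * (m + i) + 2 = 2 * m + (2 * i + 2) by ring,
      getD_append_two_mul_add (by omega), getD_append_two_mul_add (by omega)]
    exact heq

theorem append_right (hC : IsGenericTypeCChain C) (ht : 1 ≤ C.getLastI) (R : List ℕ)
    (h : NormMem C c) : NormMem (C ++ R) (c ++ R) := by
  induction h with
  | base => exact base
  | step c i hc hi heq ih =>
    rw [← degenAt_append_right R hi (hc.length_degenAt hC ht hi heq)]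
    refine step _ _ ih (by simp; omega) ?_
    rwa [getD_append _ _ _ _ (by omega), getD_append _ _ _ _ (by omega)]

end NormMem

theorem chains_cons_cons (a b : ℕ) (rest : List ℕ) :
    chains (a :: b :: rest) = match chains rest with
      | [] => [[a, b]]
      | C :: L => if C.headI < b then [a, b] :: C :: L else (a :: b :: C) :: L := rfl

theorem exists_chains_cons_cons (a b : ℕ) (rest : List ℕ) :
    ∃ C L, chains (a :: b :: rest) = (a :: b :: C) :: L := by
  rw [chains_cons_cons]
  rcases chains rest with _ | ⟨C, L⟩
  · exact ⟨[], [], rfl⟩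
  · dsimp only
    split_ifs
    exacts [⟨[], C :: L, rfl⟩, ⟨C, L, rfl⟩]

theorem headI_of_chains_eq_cons {l C : List ℕ} {L : List (List ℕ)} (h : chains l = C :: L) :
    C ≠ [] ∧ C.headI = l.headI := by
  match l, h with
  | a :: b :: rest, h =>
    obtain ⟨C', L', h'⟩ := exists_chains_cons_cons a b rest
    rw [h'] at h
    cases h
    simp

theorem flatten_chains : ∀ {l : List ℕ}, Even l.length → (chains l).flatten = l
  | [], _ => rfl
  | [_], h => by simp at h
  | a :: b :: rest, h => by
    have ih := flatten_chains (l := rest) (by simpa [Nat.even_add_one] using h)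
    rw [chains_cons_cons]
    rcases hc : chains rest with _ | ⟨C, L⟩
    all_goals rw [hc] at ih; dsimp only
    · simp [← ih]
    · split_ifs <;> simp [← ih]

theorem isChain_chains : ∀ l : List ℕ, (chains l).IsChain fun X Y => Y.headI < X.getLastI
  | [] | [_] => isChain_nil
  | a :: b :: rest => by
    have ih := isChain_chains rest
    rw [chains_cons_cons]
    rcases hc : chains rest with _ | ⟨C, L⟩
    · exact isChain_singleton _
    · rw [hc] at ih
      dsimp only
      split_ifs with hlt
      · exact isChain_cons_cons.2 ⟨hlt, ih⟩
      · rcases L with _ | ⟨D, L⟩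
        · exact isChain_singleton _
        · have hC := (headI_of_chains_eq_cons hc).1
          rw [isChain_cons_cons] at ih ⊢
          rw [getLastI_cons_of_ne_nil (by simp), getLastI_cons_of_ne_nil hC]
          exact ih

theorem TypeC.mem_chains : ∀ {O B : List ℕ}, TypeC O → B ∈ chains O → TypeC B ∧ IsChainSeq B
  | [], _, _, hB | [_], _, _, hB => by simp [chains] at hB
  | a :: b :: rest, B, hO, hB => by
    obtain ⟨hba, hpar, hrest, hOr⟩ := typeC_cons_cons.1 hO
    have ih : ∀ B ∈ chains rest, TypeC B ∧ IsChainSeq B := fun B hB => TypeC.mem_chains hOr hB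
    have hpair : TypeC [a, b] ∧ IsChainSeq [a, b] :=
      ⟨typeC_cons_cons.2 ⟨hba, hpar, by simp, typeC_nil⟩, isChainSeq_cons_cons.2 ⟨hba, Or.inl rfl⟩⟩
    rw [chains_cons_cons] at hB
    rcases hc : chains rest with _ | ⟨C, L⟩ <;> rw [hc] at hB ih <;> dsimp only at hB
    · simp only [mem_singleton] at hB
      exact hB ▸ hpair
    · obtain ⟨hCne, hCh⟩ := headI_of_chains_eq_cons hc
      split_ifs at hB with hlt
      · rcases mem_cons.1 hB with rfl | hB
        exacts [hpair, ih B hB]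
      · rcases mem_cons.1 hB with rfl | hB
        · obtain ⟨hTC, hCC⟩ := ih C (by simp)
          obtain ⟨c, C', rfl⟩ := exists_cons_of_ne_nil hCne
          obtain ⟨r, rest', rfl⟩ :=
            exists_cons_of_ne_nil (l := rest) (by rintro rfl; simp [chains] at hc)
          simp only [headI_cons] at hCh hlt
          have : r ≤ b := hrest r rfl
          refine ⟨typeC_cons_cons.2 ⟨hba, hpar, by simp; omega, hTC⟩,
            isChainSeq_cons_cons.2 ⟨hba, Or.inr ⟨by simp; omega, hCC⟩⟩⟩
        · exact ih B (mem_cons_of_mem _ hB)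

theorem chains_append : ∀ {A : List ℕ} (B : List ℕ), Even A.length →
    (B ≠ [] → B.headI < A.getLastI) → chains (A ++ B) = chains A ++ chains B
  | [], _, _, _ => rfl
  | [_], _, h, _ | [_, _, _], _, h, _ => by simp [Nat.even_add_one] at h
  | [a, b], B, _, hB => by
    rw [cons_append, cons_append, nil_append, chains_cons_cons]
    rcases hc : chains B with _ | ⟨C, L⟩
    · rfl
    · obtain ⟨hCne, hCh⟩ := headI_of_chains_eq_cons hc
      have hBne : B ≠ [] := by rintro rfl; simp [chains] at hc
      have := hB hBne
      simp only [getLastI] at this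
      simp [hCh, this, chains]
  | a :: b :: c :: d :: A, B, hA, hB => by
    have ih := chains_append (A := c :: d :: A) B (by simpa [Nat.even_add_one] using hA)
      (fun hne => by simpa [getLastI_cons_of_ne_nil] using hB hne)
    obtain ⟨C, L, hc⟩ := exists_chains_cons_cons c d A
    rw [cons_append, cons_append, chains_cons_cons, ih, chains_cons_cons a b, hc]
    simp only [cons_append]
    split_ifs <;> rfl

section Blocks

variable {Bs fs : List (List ℕ)}

theorem headI_flatten_lt_getLastI {B f : List ℕ} (hBs : ∀ X ∈ B :: Bs, IsGenericTypeCChain X)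
    (hbd : (B :: Bs).IsChain fun X Y => Y.headI < X.getLastI) (hBf : NormMem B f)
    (hf : Forall₂ NormMem Bs fs) (hne : fs.flatten ≠ []) : fs.flatten.headI < f.getLastI := by
  cases hf with
  | nil => simp at hne
  | @cons B' f' _ _ hBf' _ =>
    have hB' := hBs B' (by simp)
    obtain ⟨a, l, hl⟩ := exists_cons_of_ne_nil (hBf'.ne_nil hB')
    have := hBf'.headI_eq hB'
    simp only [hl, flatten_cons, cons_append, headI_cons] at this ⊢
    have := hBf.getLastI_le (hBs B (by simp))
    have := (isChain_cons_cons.1 hbd).1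
    omega

theorem normMem_flatten (hBs : ∀ B ∈ Bs, IsGenericTypeCChain B)
    (hbd : Bs.IsChain fun X Y => Y.headI < X.getLastI) (hf : Forall₂ NormMem Bs fs) :
    NormMem Bs.flatten fs.flatten := by
  induction hf with
  | nil => exact .base
  | @cons B f Bs fs hBf hf ih =>
    have hB := hBs B (by simp)
    have hhead : NormMem (B ++ Bs.flatten) (f ++ Bs.flatten) := by
      rcases Bs with _ | ⟨B', Bs⟩
      · simpa using hBf
      · have := (isChain_cons_cons.1 hbd).1
        exact hBf.append_right hB (by omega) _
    exact hhead.trans <| (ih (fun X hX => hBs X (by simp [hX])) hbd.tail).append_left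
      (hBf.even_length hB)

theorem chains_flatten_of_forall₂ (hBs : ∀ B ∈ Bs, IsGenericTypeCChain B)
    (hbd : Bs.IsChain fun X Y => Y.headI < X.getLastI) (hf : Forall₂ NormMem Bs fs) :
    chains fs.flatten = (fs.map chains).flatten := by
  induction hf with
  | nil => rfl
  | @cons B f Bs fs hBf hf ih =>
    rw [flatten_cons, map_cons, flatten_cons,
      chains_append _ (hBf.even_length (hBs B (by simp)))
        (headI_flatten_lt_getLastI hBs hbd hBf hf),
      ih (fun X hX => hBs X (by simp [hX])) hbd.tail]

theorem eq_of_flatten_eq {gs : List (List ℕ)} (hBs : ∀ B ∈ Bs, IsGenericTypeCChain B)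
    (hbd : Bs.IsChain fun X Y => Y.headI < X.getLastI) (hf : Forall₂ NormMem Bs fs)
    (hg : Forall₂ NormMem Bs gs) (h : fs.flatten = gs.flatten) : fs = gs := by
  induction hf generalizing gs with
  | nil => exact (forall₂_nil_left_iff.1 hg).symm
  | @cons B f Bs fs hBf hf ih =>
    obtain ⟨g, gs, hBg, hgs, rfl⟩ := forall₂_cons_left_iff.1 hg
    rcases Bs with _ | ⟨B', Bs⟩
    · cases hf; cases hgs
      simpa using h
    · have hB := hBs B (by simp)
      have ht : 1 ≤ B.getLastI := by have := (isChain_cons_cons.1 hbd).1; omega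
      obtain ⟨rfl, h'⟩ := append_inj h ((hBf.length_eq hB ht).trans (hBg.length_eq hB ht).symm)
      rw [ih (fun X hX => hBs X (by simp [hX])) hbd.tail hgs h']

theorem exists_forall₂_degenAt_flatten (hBs : ∀ B ∈ Bs, IsGenericTypeCChain B)
    (hbd : Bs.IsChain fun X Y => Y.headI < X.getLastI) (hf : Forall₂ NormMem Bs fs) {i : ℕ}
    (hi : 2 * i + 3 < fs.flatten.length)
    (heq : fs.flatten.getD (2 * i + 1) 0 = fs.flatten.getD (2 * i + 2) 0) :
    ∃ gs, Forall₂ NormMem Bs gs ∧ degenAt fs.flatten i = gs.flatten := by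
  induction hf generalizing i with
  | nil => simp at hi
  | @cons B f Bs fs hBf hf ih =>
    have hB := hBs B (by simp)
    obtain ⟨k, hk⟩ := hBf.even_length hB
    simp only [flatten_cons, length_append] at hi heq ⊢
    rcases lt_trichotomy (i + 1) k with hik | rfl | hik
    · have hstep := NormMem.step f i hBf (by omega)
        (by rwa [getD_append _ _ _ _ (by omega), getD_append _ _ _ _ (by omega)] at heq)
      refine ⟨degenAt f i :: fs, .cons hstep hf, ?_⟩
      rcases Bs with _ | ⟨B', Bs⟩
      · cases hf; simp
      · have := (isChain_cons_cons.1 hbd).1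
        exact degenAt_append_right _ (by omega) (hBf.length_degenAt hB (by omega) (by omega)
          (by rwa [getD_append _ _ _ _ (by omega), getD_append _ _ _ _ (by omega)] at heq))
    · exfalso
      have hne : fs.flatten ≠ [] := by rintro h; simp [h] at hi; omega
      have hlt := headI_flatten_lt_getLastI hBs hbd hBf hf hne
      rw [getD_append _ _ _ _ (by omega), show 2 * i + 1 = f.length - 1 by omega,
        getD_length_sub_one, show 2 * i + 2 = 2 * (i + 1) + 0 by ring,
        getD_append_two_mul_add (by omega)] at heq
      obtain ⟨a, l, hl⟩ := exists_cons_of_ne_nil hne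
      rw [hl] at heq hlt
      simp only [getD_cons_zero, headI_cons] at heq hlt
      omega
    · obtain ⟨j, rfl⟩ : ∃ j, i = k + j := ⟨i - k, by omega⟩
      have hshift : ∀ r,
          (f ++ fs.flatten).getD (2 * (k + j) + r) 0 = fs.flatten.getD (2 * j + r) 0 :=
        fun r => by rw [show 2 * (k + j) + r = 2 * k + (2 * j + r) by ring,
          getD_append_two_mul_add (by omega)]
      obtain ⟨gs, hgs, hdeg⟩ := ih (fun X hX => hBs X (by simp [hX])) hbd.tail (i := j)
        (by omega) (by rwa [hshift, hshift] at heq)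
      refine ⟨f :: gs, .cons hBf hgs, ?_⟩
      rw [degenAt_append_left (by omega) (by omega), hdeg, flatten_cons]

end Blocks

theorem ncard_setOf_forall₂ {α β : Type*} (R : α → β → Prop) (l : List α) :
    {m | Forall₂ R l m}.ncard = (l.map fun a => {b | R a b}.ncard).prod := by
  induction l with
  | nil => simp [forall₂_nil_left_iff]
  | cons a l ih =>
    have himage : {m | Forall₂ R (a :: l) m} =
        (fun p : β × List β => p.1 :: p.2) '' ({b | R a b} ×ˢ {m | Forall₂ R l m}) := by
      ext m
      simp only [Set.mem_ofPred_eq, forall₂_cons_left_iff, Set.mem_image, Set.mem_prod,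
        Prod.exists]
      exact ⟨fun ⟨b, m, hb, hm, he⟩ => ⟨b, m, ⟨hb, hm⟩, he.symm⟩,
        fun ⟨b, m, ⟨hb, hm⟩, he⟩ => ⟨b, m, hb, hm, he.symm⟩⟩
    rw [himage, Set.InjOn.ncard_image (fun p _ q _ h => by simpa [Prod.ext_iff] using h),
      Set.ncard_prod, ih, map_cons, prod_cons]

/-- for a generic type C column sequence `O` with chains
`C_1, …, C_l`, concatenation is a bijection from
`Norm(C_1) × … × Norm(C_l)` onto `Norm(O)`, the chain decomposition of each
member of `Norm(O)` is the concatenation of the chain decompositions of the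
factors, and `|Norm(O)| = ∏ᵢ |Norm(Cᵢ)|`. -/
theorem norm_product_structure (O : List ℕ) (hO : TypeC O) (hg : GenericSeq O) :
    (∀ f : List (List ℕ), List.Forall₂ (fun C P => NormMem C P) (chains O) f →
        NormMem O f.flatten ∧ chains f.flatten = (f.map chains).flatten) ∧
    (∀ f g : List (List ℕ), List.Forall₂ (fun C P => NormMem C P) (chains O) f →
        List.Forall₂ (fun C P => NormMem C P) (chains O) g →
        f.flatten = g.flatten → f = g) ∧
    (∀ Q, NormMem O Q → ∃ f : List (List ℕ),
        List.Forall₂ (fun C P => NormMem C P) (chains O) f ∧ Q = f.flatten) ∧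
    {Q : List ℕ | NormMem O Q}.ncard =
      ((chains O).map fun C => {P : List ℕ | NormMem C P}.ncard).prod := by
  have hBs : ∀ B ∈ chains O, IsGenericTypeCChain B := fun B hB =>
    ⟨(hO.mem_chains hB).1, (hO.mem_chains hB).2, hg B hB⟩
  have hbd := isChain_chains O
  have hflat : (chains O).flatten = O := flatten_chains hO.1
  have hinj : Set.InjOn flatten {f | Forall₂ NormMem (chains O) f} :=
    fun f hf g hg' => eq_of_flatten_eq hBs hbd hf hg'
  have hsurj : ∀ Q, NormMem O Q → ∃ f, Forall₂ NormMem (chains O) f ∧ Q = f.flatten := by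
    intro Q hQ
    induction hQ with
    | base => exact ⟨chains O, forall₂_same.2 fun _ _ => .base, hflat.symm⟩
    | step c i _ hi heq ih =>
      obtain ⟨f, hf, rfl⟩ := ih
      exact exists_forall₂_degenAt_flatten hBs hbd hf hi heq
  have himage : {Q | NormMem O Q} = flatten '' {f | Forall₂ NormMem (chains O) f} := by
    ext Q
    refine ⟨fun hQ => ?_, ?_⟩
    · obtain ⟨f, hf, rfl⟩ := hsurj Q hQ
      exact ⟨f, hf, rfl⟩
    · rintro ⟨f, hf, rfl⟩
      exact hflat ▸ normMem_flatten hBs hbd hf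
  refine ⟨fun f hf => ⟨hflat ▸ normMem_flatten hBs hbd hf, chains_flatten_of_forall₂ hBs hbd hf⟩,
    fun f g hf hg' => hinj hf hg', hsurj, ?_⟩
  rw [himage, hinj.ncard_image, ncard_setOf_forall₂]
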